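/- Let L be a finite field of order q and s an invertible exponent whose Weil sum is three-valued on L^× with values 0, A, B, where A = p^a α, B = p^b β, A - B = p^c γ with p ∤ αβγ. Then α, β, γ are pairwise coprime, αγ divides q - B, and βγ divides q - A. -/

import Mathlib

/-!
Orthogonality of the additive character `ψ` gives the moments `∑ₐ W(a) = q` and
`∑ₐ W(a)² = q²`; the second uses that `x ↦ xˢ` is odd, which holds because `s` is prime to
`q - 1`, and `W(0) = 0` because `x ↦ xˢ` permutes `L`. Counting values, `N_A A + N_B B = q` and
`N_A A² + N_B B² = q²`, hence `N_A · A (A - B) = q (q - B)` and `N_B · B (B - A) = q (q - A)`.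
As `q` is a power of `p` and `α, β, γ` are prime to `p`, the divisibilities follow; a common
divisor of two of `A`, `B`, `A - B` divides `N_A A + N_B B = q`, which gives the coprimality.
-/

open Finset

/-- The canonical additive character of a finite field of characteristic `p`:
`μ(x) = exp(2πi · Tr(x)/p)` where `Tr` is the absolute trace to `F_p`. -/
noncomputable def mu (p : ℕ) {L : Type*} [Field L] [Fintype L] [Algebra (ZMod p) L] (x : L) : ℂ :=
  Complex.exp (2 * Real.pi * Complex.I * ((Algebra.trace (ZMod p) L x).val : ℂ) / p)

section WeilSum

variable {L R : Type*} [Field L] [Fintype L] [CommRing R] [IsDomain R]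

def weilSum (ψ : AddChar L R) (s : ℕ) (a : L) : R := ∑ x, ψ (x ^ s - a * x)

variable {ψ : AddChar L R}

lemma AddChar.sum_apply_mul_of_ne_one [DecidableEq L] (hψ : ψ ≠ 1) (c : L) :
    ∑ a, ψ (a * c) = if c = 0 then (Fintype.card L : R) else 0 := by
  simpa using AddChar.sum_mulShift c (AddChar.IsPrimitive.of_ne_one hψ)

lemma sum_weilSum (hψ : ψ ≠ 1) {s : ℕ} (hs : s ≠ 0) :
    ∑ a, weilSum ψ s a = Fintype.card L := by
  classical
  have hsplit (x a : L) : ψ (x ^ s - a * x) = ψ (x ^ s) * ψ (a * -x) := by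
    rw [← AddChar.map_add_eq_mul]; congr 1; ring
  simp only [weilSum]
  rw [sum_comm]
  simp only [hsplit, ← mul_sum, AddChar.sum_apply_mul_of_ne_one hψ, neg_eq_zero]
  simp [zero_pow hs]

lemma sum_weilSum_sq (hψ : ψ ≠ 1) {s : ℕ} (hodd : ∀ x : L, (-x) ^ s = -x ^ s) :
    ∑ a, weilSum ψ s a ^ 2 = (Fintype.card L : R) ^ 2 := by
  classical
  have hsplit (x y a : L) : ψ (x ^ s - a * x) * ψ (y ^ s - a * y) =
      ψ (x ^ s + y ^ s) * ψ (a * -(x + y)) := by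
    rw [← AddChar.map_add_eq_mul, ← AddChar.map_add_eq_mul]; congr 1; ring
  calc ∑ a, weilSum ψ s a ^ 2
      = ∑ x, ∑ y, ψ (x ^ s + y ^ s) * ∑ a, ψ (a * -(x + y)) := by
        simp only [weilSum, sq, sum_mul_sum, hsplit]
        rw [sum_comm]
        simp only [mul_sum]
        exact sum_congr rfl fun x _ => sum_comm
    _ = ∑ x, ψ (x ^ s + (-x) ^ s) * Fintype.card L := by
        simp only [AddChar.sum_apply_mul_of_ne_one hψ, neg_eq_zero, add_eq_zero_iff_eq_neg',
          mul_ite, mul_zero, sum_ite_eq', mem_univ, if_true]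
    _ = (Fintype.card L : R) ^ 2 := by
        simp [hodd, sq]

lemma weilSum_zero_right (hψ : ψ ≠ 1) {s : ℕ} (hbij : Function.Bijective fun x : L => x ^ s) :
    weilSum ψ s 0 = 0 := by
  simpa [weilSum] using
    (Fintype.sum_bijective _ hbij (fun x => ψ (x ^ s)) ψ fun _ => rfl).trans
      (AddChar.sum_eq_zero_of_ne_one hψ)

lemma weilSum_zero_left (hψ : ψ ≠ 1) {a : L} (ha : a ≠ 0) : weilSum ψ 0 a = 0 := by
  have hbij : Function.Bijective fun x : L => 1 - a * x :=
    (Equiv.subLeft 1).bijective.comp (mulLeft_bijective₀ a ha)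
  simpa [weilSum] using
    (Fintype.sum_bijective _ hbij (fun x => ψ (1 - a * x)) ψ fun _ => rfl).trans
      (AddChar.sum_eq_zero_of_ne_one hψ)

end WeilSum

section FiniteField

variable {L : Type*} [Field L] [Fintype L]

lemma FiniteField.pow_bijective_of_coprime {s : ℕ} (hs : s ≠ 0)
    (hcop : s.Coprime (Fintype.card L - 1)) : Function.Bijective fun x : L => x ^ s := by
  classical
  refine Finite.injective_iff_bijective.mp fun x y hxy => ?_
  rcases eq_or_ne x 0 with rfl | hx
  · exact ((pow_eq_zero_iff hs).mp (hxy.symm.trans (zero_pow hs))).symm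
  have hy : y ≠ 0 := by rintro rfl; exact hx ((pow_eq_zero_iff hs).mp (hxy.trans (zero_pow hs)))
  have hcard : (Nat.card Lˣ).Coprime s := by
    rwa [Nat.card_eq_fintype_card, Fintype.card_units, Nat.coprime_comm]
  have := (powCoprime hcard).injective (a₁ := Units.mk0 x hx) (a₂ := Units.mk0 y hy)
    (Units.ext (by simpa using hxy))
  simpa using congrArg Units.val this

lemma FiniteField.neg_pow_of_coprime {p s : ℕ} [CharP L p] (hp : p.Prime)
    (hcop : s.Coprime (Fintype.card L - 1)) (x : L) : (-x) ^ s = -x ^ s := by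
  rcases eq_or_ne p 2 with rfl | hp2
  · simp [CharTwo.neg_eq]
  have hodd : Odd s := by
    have hcard : Fintype.card L % 2 = 1 :=
      FiniteField.odd_card_of_char_ne_two (by rwa [ringChar.eq L p])
    refine Nat.odd_iff.mpr (Nat.two_dvd_ne_zero.mp fun h2 => ?_)
    exact absurd (Nat.dvd_one.mp (hcop ▸ Nat.dvd_gcd h2 (by omega))) (by decide)
  exact hodd.neg_pow x

end FiniteField

section StdChar

variable (p : ℕ) [Fact p.Prime] (L : Type*) [Field L] [Fintype L] [Algebra (ZMod p) L]

noncomputable def muChar : AddChar L ℂ :=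
  ZMod.stdAddChar.compAddMonoidHom (Algebra.trace (ZMod p) L).toAddMonoidHom

lemma muChar_apply (x : L) : muChar p L x = mu p x := by
  simp [muChar, mu, ZMod.stdAddChar_apply, ZMod.toCircle_apply]

lemma muChar_ne_one : muChar p L ≠ 1 := by
  obtain ⟨x, hx⟩ := Algebra.trace_surjective (ZMod p) L 1
  refine AddChar.ne_one_iff.mpr ⟨x, fun h => one_ne_zero (hx.symm.trans ?_)⟩
  exact ZMod.injective_stdAddChar (h.trans (AddChar.map_zero_eq_one _).symm)

end StdChar

lemma Fintype.sum_comp_eq_card_smul_add_card_smul {ι M R : Type*} [Fintype ι] [Zero M]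
    [DecidableEq M] [AddCommMonoid R] {f : ι → M} {x y : M} (hxy : x ≠ y)
    (hf : ∀ i, f i = 0 ∨ f i = x ∨ f i = y) {g : M → R} (hg : g 0 = 0) :
    ∑ i, g (f i) = #{i | f i = x} • g x + #{i | f i = y} • g y := by
  have hpoint (i : ι) :
      g (f i) = (if f i = x then g x else 0) + (if f i = y then g y else 0) := by
    rcases hf i with h | h | h <;> simp only [h] <;> split_ifs <;> simp_all
  simp only [hpoint, sum_add_distrib, ← sum_filter, sum_const]

lemma Int.isCoprime_prime_pow_of_not_dvd {p : ℕ} (hp : p.Prime) {x : ℤ} (hx : ¬(p : ℤ) ∣ x)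
    (e : ℕ) : IsCoprime x ((p : ℤ) ^ e) :=
  ((Prime.coprime_iff_not_dvd (Nat.prime_iff_prime_int.mp hp)).mpr hx).symm.pow_right

lemma Int.gcd_eq_one_of_isCoprime_of_dvd {x y q : ℤ} (hx : IsCoprime x q)
    (h : (Int.gcd x y : ℤ) ∣ q) : Int.gcd x y = 1 := by
  simpa using Int.ofNat_isUnit.mp (hx.isUnit_of_dvd' (Int.gcd_dvd_left _ _) h)

-- The second moment minus `B` times the first is `N_A · A (A - B) = q (q - B)`.
lemma dvd_sub_of_moments {NA NB A B q d : ℤ} (h1 : NA * A + NB * B = q)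
    (h2 : NA * A ^ 2 + NB * B ^ 2 = q ^ 2) (hd : d ∣ A * (A - B)) (hdq : IsCoprime d q) :
    d ∣ q - B := by
  have key : NA * (A * (A - B)) = q * (q - B) := by linear_combination h2 - B * h1
  exact hdq.dvd_of_dvd_mul_left (key ▸ hd.mul_left NA)

theorem coprime_and_dvd_of_moments {p : ℕ} (hp : p.Prime) {e : ℕ} {NA NB A B : ℤ}
    (h1 : NA * A + NB * B = (p : ℤ) ^ e) (h2 : NA * A ^ 2 + NB * B ^ 2 = ((p : ℤ) ^ e) ^ 2)
    {a b c : ℕ} {α β γ : ℤ} (hα : ¬(p : ℤ) ∣ α) (hβ : ¬(p : ℤ) ∣ β) (hγ : ¬(p : ℤ) ∣ γ)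
    (hAa : A = (p : ℤ) ^ a * α) (hBb : B = (p : ℤ) ^ b * β) (hCc : A - B = (p : ℤ) ^ c * γ) :
    Int.gcd α β = 1 ∧ Int.gcd α γ = 1 ∧ Int.gcd β γ = 1 ∧
      α * γ ∣ (p : ℤ) ^ e - B ∧ β * γ ∣ (p : ℤ) ^ e - A := by
  have hcop {x : ℤ} (hx : ¬(p : ℤ) ∣ x) := Int.isCoprime_prime_pow_of_not_dvd hp hx e
  have hcommon {d : ℤ} (hdA : d ∣ A) (hdB : d ∣ B) : d ∣ (p : ℤ) ^ e :=
    h1 ▸ dvd_add (hdA.mul_left _) (hdB.mul_left _)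
  have hdvdA {d : ℤ} (h : d ∣ α) : d ∣ A := hAa ▸ h.mul_left _
  have hdvdB {d : ℤ} (h : d ∣ β) : d ∣ B := hBb ▸ h.mul_left _
  have hdvdC {d : ℤ} (h : d ∣ γ) : d ∣ A - B := hCc ▸ h.mul_left _
  refine ⟨Int.gcd_eq_one_of_isCoprime_of_dvd (hcop hα) ?_,
    Int.gcd_eq_one_of_isCoprime_of_dvd (hcop hα) ?_,
    Int.gcd_eq_one_of_isCoprime_of_dvd (hcop hβ) ?_,
    dvd_sub_of_moments h1 h2 ?_ ((hcop hα).mul_left (hcop hγ)),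
    dvd_sub_of_moments (NA := NB) (NB := NA) (A := B) (B := A) (by linear_combination h1)
      (by linear_combination h2) ?_ ((hcop hβ).mul_left (hcop hγ))⟩
  · exact hcommon (hdvdA (Int.gcd_dvd_left _ _)) (hdvdB (Int.gcd_dvd_right _ _))
  · have hA := hdvdA (Int.gcd_dvd_left α γ)
    exact hcommon hA (by simpa using dvd_sub hA (hdvdC (Int.gcd_dvd_right α γ)))
  · have hB := hdvdB (Int.gcd_dvd_left β γ)
    exact hcommon (by simpa using dvd_add (hdvdC (Int.gcd_dvd_right β γ)) hB) hB
  · exact mul_dvd_mul (hdvdA dvd_rfl) (hdvdC dvd_rfl)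
  · exact (mul_dvd_mul (hdvdB dvd_rfl) (hdvdC dvd_rfl)).trans ⟨-1, by ring⟩

lemma exists_moments_of_weilSum_eq_zero_or {L : Type*} [Field L] [Fintype L]
    {ψ : AddChar L ℂ} (hψ : ψ ≠ 1) {s : ℕ} (hs : s ≠ 0) (hodd : ∀ x : L, (-x) ^ s = -x ^ s)
    {A B : ℤ} (hAB : A ≠ B)
    (hval : ∀ a, weilSum ψ s a = 0 ∨ weilSum ψ s a = A ∨ weilSum ψ s a = B) :
    ∃ NA NB : ℤ, NA * A + NB * B = Fintype.card L ∧
      NA * A ^ 2 + NB * B ^ 2 = (Fintype.card L : ℤ) ^ 2 := by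
  classical
  have hAB' : (A : ℂ) ≠ B := by exact_mod_cast hAB
  refine ⟨#{a | weilSum ψ s a = A}, #{a | weilSum ψ s a = B}, ?_, ?_⟩
  · have h := Fintype.sum_comp_eq_card_smul_add_card_smul hAB' hval (g := fun w => w) rfl
    rw [sum_weilSum hψ hs] at h
    apply Int.cast_injective (α := ℂ)
    push_cast
    simpa using h.symm
  · have h := Fintype.sum_comp_eq_card_smul_add_card_smul hAB' hval (g := (· ^ 2))
      (zero_pow two_ne_zero)
    rw [sum_weilSum_sq hψ hodd] at h
    apply Int.cast_injective (α := ℂ)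
    push_cast
    simpa using h.symm

theorem stmt_18_general (p : ℕ) [Fact p.Prime] (L : Type*) [Field L] [Fintype L] [CharP L p]
    [Algebra (ZMod p) L] (s : ℕ) (hcop : Nat.Coprime s (Fintype.card L - 1))
    (A B : ℤ) (hA : A ≠ 0) (hAB : A ≠ B)
    (hW : {w : ℂ | ∃ a : L, a ≠ 0 ∧ ∑ x : L, mu p (x ^ s - a * x) = w}
            = {0, (A : ℂ), (B : ℂ)})
    (a b c : ℕ) (α β γ : ℤ) (hα : ¬ (p : ℤ) ∣ α) (hβ : ¬ (p : ℤ) ∣ β) (hγ : ¬ (p : ℤ) ∣ γ)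
    (hAa : A = (p : ℤ) ^ a * α) (hBb : B = (p : ℤ) ^ b * β) (hCc : A - B = (p : ℤ) ^ c * γ) :
    Int.gcd α β = 1 ∧ Int.gcd α γ = 1 ∧ Int.gcd β γ = 1 ∧
      (α * γ) ∣ ((Fintype.card L : ℤ) - B) ∧ (β * γ) ∣ ((Fintype.card L : ℤ) - A) := by
  have hψ := muChar_ne_one p L
  have hvalues (w : ℂ) : (∃ a ≠ 0, weilSum (muChar p L) s a = w) ↔ w = 0 ∨ w = A ∨ w = B := by
    simpa [weilSum, muChar_apply] using Set.ext_iff.mp hW w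
  rcases eq_or_ne s 0 with rfl | hs
  · obtain ⟨a, ha, hWa⟩ := (hvalues A).mpr (Or.inr (Or.inl rfl))
    exact absurd (by exact_mod_cast hWa.symm.trans (weilSum_zero_left hψ ha)) hA
  have hval (a : L) : weilSum (muChar p L) s a = 0 ∨ weilSum (muChar p L) s a = A ∨
      weilSum (muChar p L) s a = B := by
    rcases eq_or_ne a 0 with rfl | ha
    · exact Or.inl (weilSum_zero_right hψ (FiniteField.pow_bijective_of_coprime hs hcop))
    · exact (hvalues _).mp ⟨a, ha, rfl⟩
  obtain ⟨NA, NB, h1, h2⟩ := exists_moments_of_weilSum_eq_zero_or hψ hs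
    (FiniteField.neg_pow_of_coprime Fact.out hcop) hAB hval
  obtain ⟨e, -, hq⟩ := FiniteField.card L p
  have hqℤ : (Fintype.card L : ℤ) = (p : ℤ) ^ (e : ℕ) := by exact_mod_cast hq
  rw [hqℤ] at h1 h2 ⊢
  exact coprime_and_dvd_of_moments Fact.out h1 h2 hα hβ hγ hAa hBb hCc

theorem stmt_18 (p : ℕ) [Fact p.Prime] (L : Type*) [Field L] [Fintype L] [CharP L p]
    [Algebra (ZMod p) L] (s : ℕ) (hcop : Nat.Coprime s (Fintype.card L - 1))
    (A B : ℤ) (hA : A ≠ 0) (hB : B ≠ 0) (hAB : A ≠ B)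
    (hW : {w : ℂ | ∃ a : L, a ≠ 0 ∧ ∑ x : L, mu p (x ^ s - a * x) = w}
            = {0, (A : ℂ), (B : ℂ)})
    (a b c : ℕ) (α β γ : ℤ) (hα : ¬ (p : ℤ) ∣ α) (hβ : ¬ (p : ℤ) ∣ β) (hγ : ¬ (p : ℤ) ∣ γ)
    (hAa : A = (p : ℤ) ^ a * α) (hBb : B = (p : ℤ) ^ b * β) (hCc : A - B = (p : ℤ) ^ c * γ) :
    Int.gcd α β = 1 ∧ Int.gcd α γ = 1 ∧ Int.gcd β γ = 1 ∧
      (α * γ) ∣ ((Fintype.card L : ℤ) - B) ∧ (β * γ) ∣ ((Fintype.card L : ℤ) - A) :=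
  stmt_18_general p L s hcop A B hA hAB hW a b c α β γ hα hβ hγ hAa hBb hCc
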